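/- arXiv:2406.11226 — 4 statements merged into one kernel-verified Lean document; each statement's English description precedes it below -/
import Mathlib

section
/- Let (C, E, s) be a skeletally small extriangulated category, and let (T, ε) and (R, η) be contravariant right δ-functors on C such that the functors R^i are weakly effaceable for all i > 0 and the connected sequences are exact on all s-triangles. Then every morphism of functors R^0 → T^0 extends uniquely to a morphism of right δ-functors (R, η) → (T, ε). -/
open CategoryTheory CategoryTheory.Limits Opposite

universe v u

/-- An extriangulated category in the sense of Nakaoka–Palu: an additive category `C`
together with a biadditive functor `E : Cᵒᵖ ⥤ C ⥤ Ab` and a realization of extensions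
satisfying the Nakaoka–Palu axioms. `real δ x y` means that the sequence
`A --x--> B --y--> Z` belongs to the equivalence class `s δ`, for `δ ∈ E(Z, A)`. -/
class Extriangulated (C : Type u) [Category.{v} C] [Preadditive C]
    [HasZeroObject C] [HasBinaryBiproducts C] : Type (max u (v + 1)) where
  /-- the biadditive functor of extensions; `(E.obj (op Z)).obj A` is `E(Z, A)` -/
  E : Cᵒᵖ ⥤ C ⥤ AddCommGrpCat.{v}
  /-- `E` is additive in each variable -/
  additive_obj : ∀ (Z : Cᵒᵖ), (E.obj Z).Additive
  additive_map : ∀ {Z Z' : Cᵒᵖ} (f g : Z ⟶ Z'), E.map (f + g) = E.map f + E.map g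
  /-- realization predicate: `real δ x y` means `A --x--> B --y--> Z` realizes `δ` -/
  real : ∀ {A Z : C}, ((E.obj (op Z)).obj A) → ∀ {B : C}, (A ⟶ B) → (B ⟶ Z) → Prop
  /-- every extension is realized -/
  real_exists : ∀ {A Z : C} (δ : (E.obj (op Z)).obj A),
    ∃ (B : C) (x : A ⟶ B) (y : B ⟶ Z), real δ x y
  /-- the zero extension is realized by the split sequence -/
  real_zero : ∀ (A Z : C),
    real (0 : (E.obj (op Z)).obj A) (biprod.inl : A ⟶ A ⊞ Z) (biprod.snd : A ⊞ Z ⟶ Z)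
  /-- realizations are closed under isomorphisms fixing the end terms -/
  real_iso : ∀ {A Z B B' : C} (δ : (E.obj (op Z)).obj A) (x : A ⟶ B) (y : B ⟶ Z)
    (e : B ≅ B'), real δ x y → real δ (x ≫ e.hom) (e.inv ≫ y)
  /-- realized sequences are complexes -/
  real_comp_zero : ∀ {A Z B : C} {δ : (E.obj (op Z)).obj A} {x : A ⟶ B} {y : B ⟶ Z},
    real δ x y → x ≫ y = 0
  /-- realization of morphisms of extensions: if `a_* δ = c^* δ'` then any two chosen
  realizations are connected by a morphism of sequences -/
  real_hom : ∀ {A Z A' Z' B B' : C} (δ : (E.obj (op Z)).obj A) (δ' : (E.obj (op Z')).obj A')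
    (x : A ⟶ B) (y : B ⟶ Z) (x' : A' ⟶ B') (y' : B' ⟶ Z') (a : A ⟶ A') (c : Z ⟶ Z'),
    real δ x y → real δ' x' y' →
    (E.obj (op Z)).map a δ = (E.map c.op).app A' δ' →
    ∃ b : B ⟶ B', x ≫ b = a ≫ x' ∧ y ≫ c = b ≫ y'
  /-- the axiom (ET4) -/
  et4 : ∀ {A B D F C₀ : C} (δ : (E.obj (op D)).obj A) (δ' : (E.obj (op F)).obj B)
    (f : A ⟶ B) (f' : B ⟶ D) (g : B ⟶ C₀) (g' : C₀ ⟶ F),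
    real δ f f' → real δ' g g' →
    ∃ (E₀ : C) (h' : C₀ ⟶ E₀) (d : D ⟶ E₀) (e : E₀ ⟶ F)
      (δ'' : (E.obj (op E₀)).obj A),
      real δ'' (f ≫ g) h' ∧
      real ((E.obj (op F)).map f' δ') d e ∧
      g ≫ h' = f' ≫ d ∧ h' ≫ e = g' ∧
      (E.map d.op).app A δ'' = δ ∧
      (E.obj (op E₀)).map f δ'' = (E.map e.op).app B δ'
  /-- the axiom (ET4)ᵒᵖ -/
  et4op : ∀ {A B D F C₀ : C} (δ : (E.obj (op A)).obj D) (δ' : (E.obj (op B)).obj F)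
    (u : D ⟶ B) (v : B ⟶ A) (w : F ⟶ C₀) (t : C₀ ⟶ B),
    real δ u v → real δ' w t →
    ∃ (E₀ : C) (h : E₀ ⟶ C₀) (dc : E₀ ⟶ D) (ec : F ⟶ E₀)
      (δ'' : (E.obj (op A)).obj E₀),
      real δ'' h (t ≫ v) ∧
      real ((E.map u.op).app F δ') ec dc ∧
      h ≫ t = dc ≫ u ∧ ec ≫ h = w ∧
      (E.obj (op A)).map dc δ'' = δ ∧
      (E.map v.op).app E₀ δ'' = (E.obj (op B)).map ec δ'

namespace Extriangulated

variable {C : Type u} [Category.{v} C] [Preadditive C]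
  [HasZeroObject C] [HasBinaryBiproducts C] [Extriangulated C]

/-- The abelian group of `E`-extensions `E(Z, A)`. -/
abbrev Ext (Z A : C) : Type v := ((E (C := C)).obj (op Z)).obj A

/-- Pushforward `f_* δ` of an extension along `f : A ⟶ A'`. -/
abbrev push {Z A A' : C} (f : A ⟶ A') (δ : Ext Z A) : Ext Z A' :=
  ((E (C := C)).obj (op Z)).map f δ

/-- Pullback `g^* δ` of an extension along `g : Z' ⟶ Z`. -/
abbrev pull {Z Z' A : C} (g : Z' ⟶ Z) (δ : Ext Z A) : Ext Z' A :=
  ((E (C := C)).map g.op).app A δ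

/-- A deflation is a morphism appearing as the second map of an `s`-triangle. -/
def IsDeflation {B Z : C} (p : B ⟶ Z) : Prop :=
  ∃ (A : C) (x : A ⟶ B) (δ : Ext Z A), real δ x p

/-- An inflation is a morphism appearing as the first map of an `s`-triangle. -/
def IsInflation {A B : C} (x : A ⟶ B) : Prop :=
  ∃ (Z : C) (p : B ⟶ Z) (δ : Ext Z A), real δ x p

end Extriangulated

namespace Extriangulated

variable (C : Type u) [Category.{v} C] [Preadditive C]
  [HasZeroObject C] [HasBinaryBiproducts C] [Extriangulated C]

/-- A contravariant functor `Cᵒᵖ ⥤ Ab` is weakly effaceable if every element of `F(C)`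
is killed by restriction along some deflation onto `C`. -/
def WeaklyEffaceable (F : Cᵒᵖ ⥤ AddCommGrpCat.{v}) : Prop :=
  ∀ (Z : C) (x : F.obj (op Z)), ∃ (B : C) (p : B ⟶ Z),
    IsDeflation p ∧ F.map p.op x = 0

/-- A contravariant right δ-functor on the extriangulated category `C`: a sequence of
additive functors `Cᵒᵖ ⥤ Ab` together with connecting morphisms for each `E`-extension,
natural with respect to morphisms of `E`-extensions, such that the long sequence
associated with any `s`-triangle is exact. -/
structure RightDeltaFunctor where
  /-- the sequence of functors -/
  T : ℕ → Cᵒᵖ ⥤ AddCommGrpCat.{v}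
  additive : ∀ i, (T i).Additive
  /-- the connecting morphisms `ε^i_δ : T^i(A) → T^{i+1}(C)` -/
  conn : ∀ (i : ℕ) {A Z : C}, Ext Z A → ((T i).obj (op A) →+ (T (i + 1)).obj (op Z))
  /-- naturality with respect to morphisms of `E`-extensions -/
  conn_natural : ∀ (i : ℕ) {A Z A' Z' : C} (δ : Ext Z A) (δ' : Ext Z' A')
    (a : A ⟶ A') (c : Z ⟶ Z'), push a δ = pull c δ' →
    ∀ x : (T i).obj (op A'),
      conn i δ ((T i).map a.op x) = (T (i + 1)).map c.op (conn i δ' x)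
  /-- exactness at `T^i(B)` -/
  exact₁ : ∀ (i : ℕ) {A B Z : C} (δ : Ext Z A) (k : A ⟶ B) (p : B ⟶ Z),
    real δ k p → Function.Exact ⇑((T i).map p.op) ⇑((T i).map k.op)
  /-- exactness at `T^i(A)` -/
  exact₂ : ∀ (i : ℕ) {A B Z : C} (δ : Ext Z A) (k : A ⟶ B) (p : B ⟶ Z),
    real δ k p → Function.Exact ⇑((T i).map k.op) ⇑(conn i δ)
  /-- exactness at `T^{i+1}(C)` -/
  exact₃ : ∀ (i : ℕ) {A B Z : C} (δ : Ext Z A) (k : A ⟶ B) (p : B ⟶ Z),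
    real δ k p → Function.Exact ⇑(conn i δ) ⇑((T (i + 1)).map p.op)

/-- Compatibility of a family of natural transformations with the connecting morphisms,
i.e. the condition for being a morphism of right δ-functors. -/
def IsDeltaMorphism (R T : RightDeltaFunctor C) (θ : ∀ i, R.T i ⟶ T.T i) : Prop :=
  ∀ (i : ℕ) {A Z : C} (δ : Ext Z A) (x : (R.T i).obj (op A)),
    (θ (i + 1)).app (op Z) (R.conn i δ x) = T.conn i δ ((θ i).app (op A) x)

end Extriangulated

/-!
Weak effaceability of `R^{i+1}` and exactness at `R^{i+1}(Z)` show that every element of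
`R^{i+1}(Z)` is `η_δ y` for an extension `δ ∈ E(Z, A)` and some `y ∈ R^i(A)`. A morphism of
δ-functors must send it to `ε_δ (θ^i y)`, which gives uniqueness by induction on `i`. For
existence this formula has to be independent of the presentation: if `η_δ y = η_δ' y'`, then
`(y, -y')` is killed by the connecting map of the direct sum extension of `δ` and `δ'`, so by
exactness it comes from the middle term of a realization, and so does its image under `θ^i`,
which is therefore killed by `ε`. Additivity and naturality are checked on presentations.
-/

namespace Extriangulated

variable {C : Type u} [Category.{v} C] [Preadditive C]
  [HasZeroObject C] [HasBinaryBiproducts C] [Extriangulated C]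

noncomputable abbrev biprodExt {Z A A' : C} (δ : Ext Z A) (δ' : Ext Z A') : Ext Z (A ⊞ A') :=
  push biprod.inl δ + push biprod.inr δ'

lemma push_fst_biprodExt {Z A A' : C} (δ : Ext Z A) (δ' : Ext Z A') :
    push biprod.fst (biprodExt δ δ') = δ := by
  have := additive_obj (C := C) (op Z)
  simp [push, ← ConcreteCategory.comp_apply, ← Functor.map_comp]

lemma push_snd_biprodExt {Z A A' : C} (δ : Ext Z A) (δ' : Ext Z A') :
    push biprod.snd (biprodExt δ δ') = δ' := by
  have := additive_obj (C := C) (op Z)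
  simp [push, ← ConcreteCategory.comp_apply, ← Functor.map_comp]

namespace RightDeltaFunctor

variable (S : RightDeltaFunctor C) (i : ℕ)

lemma conn_map_of_push_eq {Z A A' : C} {δ : Ext Z A} {δ' : Ext Z A'} (a : A ⟶ A')
    (h : push a δ = δ') (x : (S.T i).obj (op A')) :
    S.conn i δ ((S.T i).map a.op x) = S.conn i δ' x := by
  rw [S.conn_natural i δ δ' a (𝟙 Z) (by simp [h, pull]) x]
  simp

lemma conn_pull {Z Z' A : C} (c : Z' ⟶ Z) (δ : Ext Z A) (x : (S.T i).obj (op A)) :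
    S.conn i (pull c δ) x = (S.T (i + 1)).map c.op (S.conn i δ x) := by
  simpa using S.conn_natural i (pull c δ) δ (𝟙 A) c (by simp [push]) x

lemma conn_biprodExt {Z A A' : C} (δ : Ext Z A) (δ' : Ext Z A')
    (y : (S.T i).obj (op A)) (y' : (S.T i).obj (op A')) :
    S.conn i (biprodExt δ δ') ((S.T i).map biprod.fst.op y + (S.T i).map biprod.snd.op y') =
      S.conn i δ y + S.conn i δ' y' := by
  rw [map_add, S.conn_map_of_push_eq i _ (push_fst_biprodExt δ δ'),
    S.conn_map_of_push_eq i _ (push_snd_biprodExt δ δ')]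

lemma exists_conn_eq (hR : WeaklyEffaceable C (S.T (i + 1))) {Z : C}
    (x : (S.T (i + 1)).obj (op Z)) :
    ∃ (A : C) (δ : Ext Z A) (y : (S.T i).obj (op A)), S.conn i δ y = x := by
  obtain ⟨B, p, ⟨A, k, δ, hδ⟩, hx⟩ := hR Z x
  obtain ⟨y, rfl⟩ := (S.exact₃ i δ k p hδ x).mp hx
  exact ⟨A, δ, y, rfl⟩

variable {S} {T : RightDeltaFunctor C} {i}

lemma conn_app_eq_zero {Z A : C} (θ : S.T i ⟶ T.T i) {δ : Ext Z A}
    {y : (S.T i).obj (op A)} (h : S.conn i δ y = 0) : T.conn i δ (θ.app _ y) = 0 := by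
  obtain ⟨B, k, p, hδ⟩ := real_exists δ
  obtain ⟨w, rfl⟩ := (S.exact₂ i δ k p hδ y).mp h
  rw [NatTrans.naturality_apply]
  exact (T.exact₂ i δ k p hδ).apply_apply_eq_zero _

lemma conn_app_eq_of_conn_eq {Z A A' : C} (θ : S.T i ⟶ T.T i) {δ : Ext Z A} {δ' : Ext Z A'}
    {y : (S.T i).obj (op A)} {y' : (S.T i).obj (op A')} (h : S.conn i δ y = S.conn i δ' y') :
    T.conn i δ (θ.app _ y) = T.conn i δ' (θ.app _ y') := by
  have hS : S.conn i (biprodExt δ δ')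
      ((S.T i).map biprod.fst.op y + (S.T i).map biprod.snd.op (-y')) = 0 := by
    rw [conn_biprodExt, map_neg, h, add_neg_cancel]
  have hT := conn_app_eq_zero θ hS
  rw [map_add, NatTrans.naturality_apply, NatTrans.naturality_apply, conn_biprodExt,
    map_neg, map_neg, ← sub_eq_add_neg, sub_eq_zero] at hT
  exact hT

noncomputable def extendApp (hS : WeaklyEffaceable C (S.T (i + 1))) (θ : S.T i ⟶ T.T i) {Z : C}
    (x : (S.T (i + 1)).obj (op Z)) : (T.T (i + 1)).obj (op Z) :=
  T.conn i (S.exists_conn_eq i hS x).choose_spec.choose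
    (θ.app _ (S.exists_conn_eq i hS x).choose_spec.choose_spec.choose)

lemma extendApp_conn (hS : WeaklyEffaceable C (S.T (i + 1))) (θ : S.T i ⟶ T.T i) {Z A : C}
    (δ : Ext Z A) (y : (S.T i).obj (op A)) :
    extendApp hS θ (S.conn i δ y) = T.conn i δ (θ.app _ y) :=
  conn_app_eq_of_conn_eq θ (S.exists_conn_eq i hS _).choose_spec.choose_spec.choose_spec

noncomputable def extend (hS : WeaklyEffaceable C (S.T (i + 1))) (θ : S.T i ⟶ T.T i) :
    S.T (i + 1) ⟶ T.T (i + 1) where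
  app W := AddCommGrpCat.ofHom <| AddMonoidHom.mk' (extendApp hS θ (Z := W.unop)) <| by
    intro x₁ x₂
    obtain ⟨A₁, δ₁, y₁, rfl⟩ := S.exists_conn_eq i hS x₁
    obtain ⟨A₂, δ₂, y₂, rfl⟩ := S.exists_conn_eq i hS x₂
    rw [← conn_biprodExt, extendApp_conn, extendApp_conn, extendApp_conn, map_add,
      NatTrans.naturality_apply, NatTrans.naturality_apply, conn_biprodExt]
  naturality W₁ W₂ f := by
    ext x
    obtain ⟨A, δ, y, rfl⟩ := S.exists_conn_eq i hS x
    change extendApp hS θ ((S.T (i + 1)).map f.unop.op _) =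
      (T.T (i + 1)).map f.unop.op (extendApp hS θ _)
    rw [← conn_pull, extendApp_conn, extendApp_conn, conn_pull]

lemma extend_app_conn (hS : WeaklyEffaceable C (S.T (i + 1))) (θ : S.T i ⟶ T.T i) {Z A : C}
    (δ : Ext Z A) (y : (S.T i).obj (op A)) :
    (extend hS θ).app (op Z) (S.conn i δ y) = T.conn i δ (θ.app _ y) :=
  extendApp_conn hS θ δ y

end RightDeltaFunctor

variable {S T : RightDeltaFunctor C} {i : ℕ}

lemma IsDeltaMorphism.succ_eq_of_eq (hS : WeaklyEffaceable C (S.T (i + 1)))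
    {θ θ' : ∀ j, S.T j ⟶ T.T j} (hθ : IsDeltaMorphism C S T θ)
    (hθ' : IsDeltaMorphism C S T θ') (h : θ i = θ' i) : θ (i + 1) = θ' (i + 1) := by
  ext W x
  obtain ⟨A, δ, y, rfl⟩ := S.exists_conn_eq i hS x
  rw [hθ, hθ', h]

end Extriangulated

open Extriangulated in
/-- If `(T, ε)` and `(R, η)` are right δ-functors on a (skeletally small) extriangulated
category such that `R^i` is weakly effaceable for all `i > 0`, then every morphism
`R^0 → T^0` extends uniquely to a morphism of right δ-functors `(R, η) → (T, ε)`. -/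
theorem statement2 {C : Type u} [Category.{v} C] [Preadditive C]
    [HasZeroObject C] [HasBinaryBiproducts C] [Extriangulated C]
    (T R : RightDeltaFunctor C)
    (hR : ∀ i, 0 < i → WeaklyEffaceable C (R.T i))
    (θ₀ : R.T 0 ⟶ T.T 0) :
    ∃! θ : ∀ i, R.T i ⟶ T.T i, θ 0 = θ₀ ∧ IsDeltaMorphism C R T θ := by
  let θ : ∀ i, R.T i ⟶ T.T i := fun i =>
    Nat.rec θ₀ (fun i θi => RightDeltaFunctor.extend (hR (i + 1) i.succ_pos) θi) i
  have hθ : IsDeltaMorphism C R T θ := fun i _ _ δ y =>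
    RightDeltaFunctor.extend_app_conn _ _ δ y
  refine ⟨θ, ⟨rfl, hθ⟩, fun θ' ⟨h0, hθ'⟩ => funext fun i => ?_⟩
  induction i with
  | zero => exact h0
  | succ i ih => exact hθ'.succ_eq_of_eq (hR (i + 1) i.succ_pos) hθ ih
end

section
/- Let T be a triangulated category with a thick subcategory S admitting a t-structure (X, Y) (so in particular Hom(X, Y) = 0 and ΣX ⊆ X). Then for any object A of T with Hom(A, Y) = 0 and any object B of T with Hom(Σ⁻¹X, B) = 0, the canonical functor T → T/S induces a bijection Hom_T(A, B) → Hom_{T/S}(A, B). -/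
open CategoryTheory CategoryTheory.Limits CategoryTheory.Pretriangulated

universe v u

/-!
A morphism `f₁ - f₂` is killed by the Verdier localization exactly when it factors through an
object of `S`. Such a factorization `A ⟶ s ⟶ B` vanishes: splitting `s` by its triangle
`x ⟶ s ⟶ y ⟶ x⟦1⟧`, the map `s ⟶ B` kills `x`, hence factors through `y`, and `A ⟶ y` is zero.
For fullness, write a morphism as a fraction `A ⟶ B' ⟵ B` whose cone `s` lies in `S` and split `s`
the same way: `Hom(x, B⟦1⟧) = 0` lifts `x ⟶ s` to `B'`, and `A ⟶ B'` then differs from a map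
through `B` by a map factoring through `x ∈ S`, which the localization kills.
-/

namespace CategoryTheory

variable {C : Type u} [Category.{v} C]

lemma eq_zero_of_forall_shift_shift_eq_zero [HasZeroMorphisms C] [HasShift C ℤ] {x B : C}
    (h : ∀ f : x⟦(1 : ℤ)⟧⟦(-1 : ℤ)⟧ ⟶ B, f = 0) (f : x ⟶ B) : f = 0 := by
  rw [← cancel_epi ((shiftFunctorCompIsoId C (1 : ℤ) (-1) (by omega)).hom.app x),
    h (_ ≫ f), comp_zero]

lemma eq_zero_of_forall_shift_neg_one_eq_zero [HasZeroMorphisms C] [HasShift C ℤ]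
    [(shiftFunctor C (-1 : ℤ)).PreservesZeroMorphisms] {x B : C}
    (h : ∀ f : x⟦(-1 : ℤ)⟧ ⟶ B, f = 0) (f : x ⟶ B⟦(1 : ℤ)⟧) : f = 0 := by
  rw [← (shiftFunctor C (-1 : ℤ)).map_eq_zero_iff,
    ← cancel_mono ((shiftFunctorCompIsoId C (1 : ℤ) (-1) (by omega)).hom.app B),
    h (f⟦(-1 : ℤ)⟧' ≫ _), zero_comp]

variable [HasZeroObject C] [HasShift C ℤ] [Preadditive C] [∀ n : ℤ, (shiftFunctor C n).Additive]
  [Pretriangulated C]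

namespace ObjectProperty

lemma map_eq_map_iff_exists_sub_eq_comp [IsTriangulated C] (S : ObjectProperty C)
    [S.IsTriangulated] {D : Type*} [Category D] (L : C ⥤ D) [L.IsLocalization S.trW]
    {A B : C} (f₁ f₂ : A ⟶ B) :
    L.map f₁ = L.map f₂ ↔ ∃ W, S W ∧ ∃ (u : A ⟶ W) (v : W ⟶ B), f₁ - f₂ = u ≫ v := by
  rw [MorphismProperty.map_eq_iff_postcomp L S.trW]
  constructor
  · rintro ⟨Z, s, hs, hfs⟩
    obtain ⟨W, v, w, hT, hW⟩ := (S.trW_iff' s).1 hs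
    obtain ⟨u, hu⟩ : ∃ u : A ⟶ W, f₁ - f₂ = u ≫ v := Triangle.coyoneda_exact₂ _ hT (f₁ - f₂)
      (by rw [Preadditive.sub_comp, hfs, sub_self] : (f₁ - f₂) ≫ s = 0)
    exact ⟨W, hW, u, v, hu⟩
  · rintro ⟨W, hW, u, v, huv⟩
    obtain ⟨Z, r, w, hT⟩ := distinguished_cocone_triangle v
    have hvr : v ≫ r = 0 := comp_distTriang_mor_zero₁₂ _ hT
    refine ⟨Z, r, trW.mk' S hT hW, ?_⟩
    rw [← sub_eq_zero, ← Preadditive.sub_comp, huv, Category.assoc, hvr, comp_zero]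

def HasTorsionTriangles (S : ObjectProperty C) (X Y : Set C) : Prop :=
  ∀ s : C, S s → ∃ x ∈ X, ∃ y ∈ Y, ∃ (a : x ⟶ s) (b : s ⟶ y) (c : y ⟶ x⟦(1 : ℤ)⟧),
    Triangle.mk a b c ∈ distTriang C

variable {S : ObjectProperty C} {X Y : Set C} {A B : C}

lemma HasTorsionTriangles.comp_eq_zero (hdec : S.HasTorsionTriangles X Y)
    (hA : ∀ y ∈ Y, ∀ f : A ⟶ y, f = 0) (hB : ∀ x ∈ X, ∀ f : x ⟶ B, f = 0)
    {W : C} (hW : S W) (u : A ⟶ W) (v : W ⟶ B) : u ≫ v = 0 := by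
  obtain ⟨x, hx, y, hy, a, b, c, hT⟩ := hdec W hW
  obtain ⟨v', rfl⟩ : ∃ v' : y ⟶ B, v = b ≫ v' := Triangle.yoneda_exact₂ _ hT v (hB x hx _)
  rw [← Category.assoc, hA y hy (u ≫ b), zero_comp]

lemma HasTorsionTriangles.exists_eq_comp_add_comp (hdec : S.HasTorsionTriangles X Y)
    (hA : ∀ y ∈ Y, ∀ f : A ⟶ y, f = 0) (hB : ∀ x ∈ X, ∀ f : x ⟶ B⟦(1 : ℤ)⟧, f = 0)
    {B' : C} {s : B ⟶ B'} (hs : S.trW s) (f : A ⟶ B') :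
    ∃ x ∈ X, ∃ (g : A ⟶ B) (u : A ⟶ x) (b : x ⟶ B'), f = g ≫ s + u ≫ b := by
  obtain ⟨W, t, d, hT, hW⟩ := hs
  obtain ⟨x, hx, y, hy, a, p, c, hT'⟩ := hdec W hW
  obtain ⟨u, hu⟩ : ∃ u : A ⟶ x, f ≫ t = u ≫ a :=
    Triangle.coyoneda_exact₂ _ hT' (f ≫ t) (hA y hy _)
  obtain ⟨b, hb⟩ : ∃ b : x ⟶ B', a = b ≫ t := Triangle.coyoneda_exact₃ _ hT a (hB x hx _)
  have hft : (f - u ≫ b) ≫ t = 0 := by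
    rw [Preadditive.sub_comp, hu, hb, Category.assoc, sub_self]
  obtain ⟨g, hg⟩ : ∃ g : A ⟶ B, f - u ≫ b = g ≫ s := Triangle.coyoneda_exact₂ _ hT _ hft
  exact ⟨x, hx, g, u, b, by rw [← hg, sub_add_cancel]⟩

end ObjectProperty

end CategoryTheory

/-- Let `T` be a triangulated category with a thick (triangulated) subcategory `S`
admitting a t-structure `(X, Y)`: a torsion pair on `S` (`Hom(X, Y) = 0` and every
object of `S` is an extension of an object of `X` by an object of `Y`) with
`ΣX ⊆ X`. Then for every `A` with `Hom(A, Y) = 0` and every `B` with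
`Hom(Σ⁻¹X, B) = 0`, the canonical functor `T → T/S` to the Verdier quotient induces
a bijection `Hom_T(A, B) → Hom_{T/S}(A, B)`. -/
theorem statement5 {C : Type u} [Category.{v} C] [HasZeroObject C] [HasShift C ℤ]
    [Preadditive C] [∀ n : ℤ, (shiftFunctor C n).Additive] [Pretriangulated C]
    [IsTriangulated C]
    (S : ObjectProperty C) [S.IsTriangulated] (X Y : Set C)
    (hXS : ∀ x ∈ X, S x) (hYS : ∀ y ∈ Y, S y)
    (hXY : ∀ x ∈ X, ∀ y ∈ Y, ∀ f : (x : C) ⟶ y, f = 0)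
    (hshift : ∀ x ∈ X, x⟦(1 : ℤ)⟧ ∈ X)
    (hdec : ∀ s : C, S s → ∃ x ∈ X, ∃ y ∈ Y, ∃ (a : (x : C) ⟶ s) (b : s ⟶ y)
      (c : (y : C) ⟶ x⟦(1 : ℤ)⟧), Triangle.mk a b c ∈ distTriang C)
    (A B : C)
    (hA : ∀ y ∈ Y, ∀ f : A ⟶ (y : C), f = 0)
    (hB : ∀ x ∈ X, ∀ f : (x : C)⟦(-1 : ℤ)⟧ ⟶ B, f = 0) :
    Function.Bijective (fun f : A ⟶ B => S.trW.Q.map f) := by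
  have hdec : S.HasTorsionTriangles X Y := hdec
  have hXB : ∀ x ∈ X, ∀ f : x ⟶ B, f = 0 := fun x hx =>
    eq_zero_of_forall_shift_shift_eq_zero (hB _ (hshift x hx))
  have hXB₁ : ∀ x ∈ X, ∀ f : x ⟶ B⟦(1 : ℤ)⟧, f = 0 := fun x hx =>
    eq_zero_of_forall_shift_neg_one_eq_zero (hB x hx)
  refine ⟨fun f₁ f₂ h => ?_, fun φ => ?_⟩
  · obtain ⟨W, hW, u, v, huv⟩ := (S.map_eq_map_iff_exists_sub_eq_comp S.trW.Q f₁ f₂).1 h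
    rw [← sub_eq_zero, huv, hdec.comp_eq_zero hA hXB hW]
  · obtain ⟨φ, rfl⟩ := Localization.exists_leftFraction S.trW.Q S.trW φ
    obtain ⟨x, hx, g, u, b, hf⟩ := hdec.exists_eq_comp_add_comp hA hXB₁ φ.hs φ.f
    have hQ : S.trW.Q.map φ.f = S.trW.Q.map (g ≫ φ.s) :=
      (S.map_eq_map_iff_exists_sub_eq_comp S.trW.Q _ _).2
        ⟨x, hXS x hx, u, b, by rw [hf, add_sub_cancel_left]⟩
    refine ⟨g, ?_⟩
    have := Localization.inverts S.trW.Q S.trW φ.s φ.hs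
    rw [← cancel_mono (S.trW.Q.map φ.s), MorphismProperty.LeftFraction.map_comp_map_s, hQ,
      Functor.map_comp]
end

section
/- Let E be a Quillen exact category and N a full subcategory of E. Then the class of conflations (inflation–deflation pairs) of E with respect to which every object of N is both projective and injective — i.e., the conflations X → Y → Z such that Hom(Y, N) → Hom(X, N) and Hom(N, Y) → Hom(N, Z) are surjective for all N in N — forms a Quillen exact structure on the underlying additive category of E. -/
open CategoryTheory CategoryTheory.Limits

universe v u

/-- A Quillen exact structure on an additive category `C`: a class of kernel–cokernel
pairs (conflations) satisfying Quillen's axioms. -/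
structure ExactStructure (C : Type u) [Category.{v} C] [Preadditive C]
    [HasZeroObject C] [HasBinaryBiproducts C] where
  /-- the class of conflations -/
  conflation : ∀ {X Y Z : C}, (X ⟶ Y) → (Y ⟶ Z) → Prop
  comp_zero : ∀ {X Y Z : C} {i : X ⟶ Y} {p : Y ⟶ Z}, conflation i p → i ≫ p = 0
  /-- in a conflation, the inflation is a kernel of the deflation -/
  isKernel : ∀ {X Y Z : C} {i : X ⟶ Y} {p : Y ⟶ Z} (h : conflation i p),
    Nonempty (IsLimit (KernelFork.ofι i (comp_zero h)))
  /-- in a conflation, the deflation is a cokernel of the inflation -/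
  isCokernel : ∀ {X Y Z : C} {i : X ⟶ Y} {p : Y ⟶ Z} (h : conflation i p),
    Nonempty (IsColimit (CokernelCofork.ofπ p (comp_zero h)))
  /-- the class of conflations is closed under isomorphisms -/
  iso_closed : ∀ {X Y Z X' Y' Z' : C} {i : X ⟶ Y} {p : Y ⟶ Z}
    (a : X ≅ X') (b : Y ≅ Y') (c : Z ≅ Z') (i' : X' ⟶ Y') (p' : Y' ⟶ Z'),
    conflation i p → a.hom ≫ i' = i ≫ b.hom → b.hom ≫ p' = p ≫ c.hom →
    conflation i' p'
  /-- split exact sequences are conflations -/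
  split : ∀ X Z : C, conflation (biprod.inl : X ⟶ X ⊞ Z) (biprod.snd : X ⊞ Z ⟶ Z)
  /-- inflations are closed under composition -/
  inflation_comp : ∀ {X Y W : C} (i : X ⟶ Y) (j : Y ⟶ W),
    (∃ (Z : C) (p : Y ⟶ Z), conflation i p) → (∃ (Z : C) (p : W ⟶ Z), conflation j p) →
    ∃ (Z : C) (p : W ⟶ Z), conflation (i ≫ j) p
  /-- deflations are closed under composition -/
  deflation_comp : ∀ {X Y W : C} (p : X ⟶ Y) (q : Y ⟶ W),
    (∃ (Z : C) (i : Z ⟶ X), conflation i p) → (∃ (Z : C) (i : Z ⟶ Y), conflation i q) →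
    ∃ (Z : C) (i : Z ⟶ X), conflation i (p ≫ q)
  /-- pushouts of inflations along arbitrary morphisms exist and are inflations -/
  pushout : ∀ {X Y Z X' : C} (i : X ⟶ Y) (p : Y ⟶ Z), conflation i p →
    ∀ f : X ⟶ X', ∃ (Y' : C) (i' : X' ⟶ Y') (g : Y ⟶ Y'),
      IsPushout f i i' g ∧ ∃ (Z' : C) (p' : Y' ⟶ Z'), conflation i' p'
  /-- pullbacks of deflations along arbitrary morphisms exist and are deflations -/
  pullback : ∀ {X Y Z Z' : C} (i : X ⟶ Y) (p : Y ⟶ Z), conflation i p →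
    ∀ c : Z' ⟶ Z, ∃ (Y' : C) (p' : Y' ⟶ Z') (g : Y' ⟶ Y),
      IsPullback g p' p c ∧ ∃ (X' : C) (i' : X' ⟶ Y'), conflation i' p'

namespace ExactStructure

variable {C : Type u} [Category.{v} C] [Preadditive C] [HasZeroObject C] [HasBinaryBiproducts C]
variable (E : ExactStructure C)

lemma epi_defl {X Y Z : C} {i : X ⟶ Y} {p : Y ⟶ Z} (h : E.conflation i p) : Epi p := by
  obtain ⟨hc⟩ := E.isCokernel h
  exact ⟨fun f g hfg => Cofork.IsColimit.hom_ext hc (by simpa using hfg)⟩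

lemma mono_infl {X Y Z : C} {i : X ⟶ Y} {p : Y ⟶ Z} (h : E.conflation i p) : Mono i := by
  obtain ⟨hl⟩ := E.isKernel h
  exact ⟨fun f g hfg => Fork.IsLimit.hom_ext hl (by simpa using hfg)⟩

lemma exists_desc {X Y Z T : C} {i : X ⟶ Y} {p : Y ⟶ Z} (h : E.conflation i p)
    (t : Y ⟶ T) (ht : i ≫ t = 0) : ∃ s : Z ⟶ T, p ≫ s = t := by
  obtain ⟨hc⟩ := E.isCokernel h
  obtain ⟨s, hs⟩ := CokernelCofork.IsColimit.desc' hc t ht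
  exact ⟨s, by simpa using hs⟩

lemma exists_lift {X Y Z T : C} {i : X ⟶ Y} {p : Y ⟶ Z} (h : E.conflation i p)
    (t : T ⟶ Y) (ht : t ≫ p = 0) : ∃ s : T ⟶ X, s ≫ i = t := by
  obtain ⟨hl⟩ := E.isKernel h
  obtain ⟨s, hs⟩ := KernelFork.IsLimit.lift' hl t ht
  exact ⟨s, by simpa using hs⟩


/-- Noether lemma for composed inflations. -/
lemma noether_infl {X Y W Z₁ Z₂ Z₃ : C} {i : X ⟶ Y} {p : Y ⟶ Z₁} {j : Y ⟶ W} {q : W ⟶ Z₂}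
    {r : W ⟶ Z₃} (h₁ : E.conflation i p) (h₂ : E.conflation j q)
    (h₃ : E.conflation (i ≫ j) r) :
    ∃ (u : Z₁ ⟶ Z₃) (v : Z₃ ⟶ Z₂), p ≫ u = j ≫ r ∧ r ≫ v = q ∧ E.conflation u v := by
  have ep : Epi p := E.epi_defl h₁
  have er : Epi r := E.epi_defl h₃
  have eq' : Epi q := E.epi_defl h₂
  obtain ⟨u, hu⟩ := E.exists_desc h₁ (j ≫ r)
    (by rw [← Category.assoc]; exact E.comp_zero h₃)
  obtain ⟨v, hv⟩ := E.exists_desc h₃ q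
    (by rw [Category.assoc, E.comp_zero h₂, Limits.comp_zero])
  obtain ⟨Y₀, i₀, g₀, hP, Z₀, p₀, h₀⟩ := E.pushout j q h₂ p
  -- φ : Y₀ ≅ Z₃
  let φ : Y₀ ⟶ Z₃ := hP.desc u r hu
  have hiφ : i₀ ≫ φ = u := hP.inl_desc u r hu
  have hgφ : g₀ ≫ φ = r := hP.inr_desc u r hu
  obtain ⟨ψ, hψ⟩ := E.exists_desc h₃ g₀
    (by rw [Category.assoc, ← hP.w, ← Category.assoc, E.comp_zero h₁, zero_comp])
  have hψφ : ψ ≫ φ = 𝟙 Z₃ := by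
    rw [← cancel_epi r, ← Category.assoc, hψ, hgφ, Category.comp_id]
  have huψ : u ≫ ψ = i₀ := by
    rw [← cancel_epi p, ← Category.assoc, hu, Category.assoc, hψ, hP.w]
  have hφψ : φ ≫ ψ = 𝟙 Y₀ := by
    apply hP.hom_ext
    · rw [← Category.assoc, hiφ, huψ, Category.comp_id]
    · rw [← Category.assoc, hgφ, hψ, Category.comp_id]
  have hcw : E.conflation u (ψ ≫ p₀) :=
    E.iso_closed (Iso.refl Z₁) ⟨φ, ψ, hφψ, hψφ⟩ (Iso.refl Z₀) u (ψ ≫ p₀) h₀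
      (by simpa using hiφ.symm)
      (by simp only [Iso.refl_hom, Category.comp_id]
          rw [← Category.assoc, hφψ, Category.id_comp])
  have ew : Epi (ψ ≫ p₀) := E.epi_defl hcw
  have huv : u ≫ v = 0 := by
    rw [← cancel_epi p, ← Category.assoc, hu, Category.assoc, hv, E.comp_zero h₂, Limits.comp_zero]
  obtain ⟨θ, hθ⟩ := E.exists_desc hcw v huv
  obtain ⟨θ', hθ'⟩ := E.exists_desc h₂ (r ≫ ψ ≫ p₀)
    (by rw [← Category.assoc, ← hu, Category.assoc, E.comp_zero hcw, Limits.comp_zero])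
  have h1 : θ' ≫ θ = 𝟙 Z₂ := by
    rw [← cancel_epi q, ← Category.assoc, hθ', Category.assoc, hθ, hv, Category.comp_id]
  have hv' : v ≫ θ' = ψ ≫ p₀ := by
    rw [← cancel_epi r, ← Category.assoc, hv, hθ']
  have h2 : θ ≫ θ' = 𝟙 Z₀ := by
    rw [← cancel_epi (ψ ≫ p₀), ← Category.assoc, hθ, hv', Category.comp_id]
  refine ⟨u, v, hu.symm ▸ hu, hv, ?_⟩
  exact E.iso_closed (Iso.refl Z₁) (Iso.refl Z₃) ⟨θ, θ', h2, h1⟩ u v hcw (by simp)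
    (by simpa using hθ.symm)

/-- Noether lemma for composed deflations. -/
lemma noether_defl {K L M X Y W : C} {k : K ⟶ X} {p : X ⟶ Y} {l : L ⟶ Y} {q : Y ⟶ W}
    {m : M ⟶ X} (h₁ : E.conflation k p) (h₂ : E.conflation l q)
    (h₃ : E.conflation m (p ≫ q)) :
    ∃ (u : K ⟶ M) (v : M ⟶ L), u ≫ m = k ∧ v ≫ l = m ≫ p ∧ E.conflation u v := by
  have mk' : Mono k := E.mono_infl h₁
  have mm : Mono m := E.mono_infl h₃
  have ml : Mono l := E.mono_infl h₂
  obtain ⟨u, hu⟩ := E.exists_lift h₃ k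
    (by rw [← Category.assoc, E.comp_zero h₁, zero_comp])
  obtain ⟨v, hv⟩ := E.exists_lift h₂ (m ≫ p)
    (by rw [Category.assoc]; exact E.comp_zero h₃)
  obtain ⟨P, p'', g, hPb, K', k', h₀⟩ := E.pullback k p h₁ l
  -- φ : M ≅ P
  let φ : M ⟶ P := hPb.lift m v hv.symm
  have hφg : φ ≫ g = m := hPb.lift_fst m v hv.symm
  have hφp : φ ≫ p'' = v := hPb.lift_snd m v hv.symm
  obtain ⟨ψ, hψ⟩ := E.exists_lift h₃ g
    (by rw [← Category.assoc, hPb.w, Category.assoc, E.comp_zero h₂, Limits.comp_zero])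
  have hφψ : φ ≫ ψ = 𝟙 M := by
    rw [← cancel_mono m, Category.assoc, hψ, hφg, Category.id_comp]
  have hψv : ψ ≫ v = p'' := by
    rw [← cancel_mono l, Category.assoc, hv, ← Category.assoc, hψ, hPb.w]
  have hψφ : ψ ≫ φ = 𝟙 P := by
    apply hPb.hom_ext
    · rw [Category.assoc, hφg, hψ, Category.id_comp]
    · rw [Category.assoc, hφp, hψv, Category.id_comp]
  have hcw : E.conflation (k' ≫ ψ) v :=
    E.iso_closed (Iso.refl K') ⟨ψ, φ, hψφ, hφψ⟩ (Iso.refl L) (k' ≫ ψ) v h₀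
      (by simp) (by simpa using hψv)
  have mw : Mono (k' ≫ ψ) := E.mono_infl hcw
  have huv : u ≫ v = 0 := by
    rw [← cancel_mono l, Category.assoc, hv, ← Category.assoc, hu, E.comp_zero h₁, zero_comp]
  obtain ⟨θ, hθ⟩ := E.exists_lift hcw u huv
  obtain ⟨θ', hθ'⟩ := E.exists_lift h₁ ((k' ≫ ψ) ≫ m)
    (by rw [Category.assoc, ← hv, ← Category.assoc, E.comp_zero hcw, zero_comp])
  have mu : Mono u := by
    have : Mono (u ≫ m) := by rw [hu]; exact mk'
    exact mono_of_mono u m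
  have hθ'u : θ' ≫ u = k' ≫ ψ := by
    rw [← cancel_mono m, Category.assoc, hu, hθ']
  have h1 : θ ≫ θ' = 𝟙 K := by
    rw [← cancel_mono u, Category.assoc, hθ'u, hθ, Category.id_comp]
  have h2 : θ' ≫ θ = 𝟙 K' := by
    rw [← cancel_mono (k' ≫ ψ), Category.assoc, hθ, hθ'u, Category.id_comp]
  refine ⟨u, v, hu, hv, ?_⟩
  exact E.iso_closed ⟨θ', θ, h2, h1⟩ (Iso.refl M) (Iso.refl L) u v hcw
    (by simpa using hθ'u) (by simp)

/-- In a pushout of a conflation, the deflations have isomorphic targets. -/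
lemma pushout_coker {X Y Z X' Y' Z' : C} {i : X ⟶ Y} {p : Y ⟶ Z} {f : X ⟶ X'}
    {i' : X' ⟶ Y'} {g : Y ⟶ Y'} {p' : Y' ⟶ Z'}
    (h₁ : E.conflation i p) (hP : IsPushout f i i' g) (h₂ : E.conflation i' p') :
    ∃ d : Z ⟶ Z', IsIso d ∧ p ≫ d = g ≫ p' := by
  have ep : Epi p := E.epi_defl h₁
  have ep' : Epi p' := E.epi_defl h₂
  obtain ⟨d, hd⟩ := E.exists_desc h₁ (g ≫ p')
    (by rw [← Category.assoc, ← hP.w, Category.assoc, E.comp_zero h₂, Limits.comp_zero])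
  let t : Y' ⟶ Z := hP.desc 0 p (by rw [Limits.comp_zero, E.comp_zero h₁])
  have hit : i' ≫ t = 0 := hP.inl_desc _ _ _
  have hgt : g ≫ t = p := hP.inr_desc _ _ _
  obtain ⟨e, he⟩ := E.exists_desc h₂ t hit
  have hde : d ≫ e = 𝟙 Z := by
    rw [← cancel_epi p, ← Category.assoc, hd, Category.assoc, he, hgt, Category.comp_id]
  have htd : t ≫ d = p' := by
    apply hP.hom_ext
    · rw [← Category.assoc, hit, zero_comp, E.comp_zero h₂]
    · rw [← Category.assoc, hgt, hd]
  have hed : e ≫ d = 𝟙 Z' := by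
    rw [← cancel_epi p', ← Category.assoc, he, htd, Category.comp_id]
  exact ⟨d, ⟨e, hde, hed⟩, hd⟩

/-- In a pullback of a conflation, the inflations have isomorphic sources. -/
lemma pullback_ker {X Y Z X' Y' Z' : C} {i : X ⟶ Y} {p : Y ⟶ Z} {c : Z' ⟶ Z}
    {p' : Y' ⟶ Z'} {g : Y' ⟶ Y} {i' : X' ⟶ Y'}
    (h₁ : E.conflation i p) (hPb : IsPullback g p' p c) (h₂ : E.conflation i' p') :
    ∃ d : X' ⟶ X, IsIso d ∧ d ≫ i = i' ≫ g := by
  have mi : Mono i := E.mono_infl h₁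
  have mi' : Mono i' := E.mono_infl h₂
  obtain ⟨d, hd⟩ := E.exists_lift h₁ (i' ≫ g)
    (by rw [Category.assoc, hPb.w, ← Category.assoc, E.comp_zero h₂, zero_comp])
  let t : X ⟶ Y' := hPb.lift i 0 (by rw [zero_comp, E.comp_zero h₁])
  have htg : t ≫ g = i := hPb.lift_fst _ _ _
  have htp : t ≫ p' = 0 := hPb.lift_snd _ _ _
  obtain ⟨e, he⟩ := E.exists_lift h₂ t htp
  have hed : e ≫ d = 𝟙 X := by
    rw [← cancel_mono i, Category.assoc, hd, ← Category.assoc, he, htg, Category.id_comp]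
  have hdt : d ≫ t = i' := by
    apply hPb.hom_ext
    · rw [Category.assoc, htg, hd]
    · rw [Category.assoc, htp, Limits.comp_zero, E.comp_zero h₂]
  have hde : d ≫ e = 𝟙 X' := by
    rw [← cancel_mono i', Category.assoc, he, hdt, Category.id_comp]
  exact ⟨d, ⟨e, hde, hed⟩, hd⟩

end ExactStructure

/-- Dräxler–Reiten–Smalø–Solberg: given a Quillen exact category `(C, E)` and a full
subcategory `N`, the class of `E`-conflations with respect to which every object of
`N` is both projective and injective forms a Quillen exact structure on `C`. -/
theorem statement10 {C : Type u} [Category.{v} C] [Preadditive C]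
    [HasZeroObject C] [HasBinaryBiproducts C]
    (E : ExactStructure C) (N : Set C) :
    ∃ E' : ExactStructure C, ∀ (X Y Z : C) (i : X ⟶ Y) (p : Y ⟶ Z),
      E'.conflation i p ↔
        (E.conflation i p ∧
          (∀ N₀ ∈ N, ∀ h : X ⟶ N₀, ∃ g : Y ⟶ N₀, i ≫ g = h) ∧
          (∀ N₀ ∈ N, ∀ h : (N₀ : C) ⟶ Z, ∃ g : (N₀ : C) ⟶ Y, g ≫ p = h)) := by
  refine ⟨{
    conflation := fun {X Y Z} i p => E.conflation i p ∧
      (∀ N₀ ∈ N, ∀ h : X ⟶ N₀, ∃ g : Y ⟶ N₀, i ≫ g = h) ∧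
      (∀ N₀ ∈ N, ∀ h : (N₀ : C) ⟶ Z, ∃ g : (N₀ : C) ⟶ Y, g ≫ p = h)
    comp_zero := fun h => E.comp_zero h.1
    isKernel := fun h => E.isKernel h.1
    isCokernel := fun h => E.isCokernel h.1
    iso_closed := by
      rintro X Y Z X' Y' Z' i p a b c i' p' ⟨h, hproj, hinj⟩ w₁ w₂
      refine ⟨E.iso_closed a b c i' p' h w₁ w₂, ?_, ?_⟩
      · intro N₀ hN h'
        obtain ⟨g, hg⟩ := hproj N₀ hN (a.hom ≫ h')
        refine ⟨b.inv ≫ g, ?_⟩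
        rw [← cancel_epi a.hom, ← Category.assoc, w₁]
        simp [hg]
      · intro N₀ hN h'
        obtain ⟨g, hg⟩ := hinj N₀ hN (h' ≫ c.inv)
        refine ⟨g ≫ b.hom, ?_⟩
        rw [Category.assoc, w₂, ← Category.assoc, hg, Category.assoc, Iso.inv_hom_id,
          Category.comp_id]
    split := fun X Z =>
      ⟨E.split X Z,
        fun N₀ _ h => ⟨biprod.fst ≫ h, by rw [← Category.assoc, biprod.inl_fst,
          Category.id_comp]⟩,
        fun N₀ _ h => ⟨h ≫ biprod.inr, by rw [Category.assoc, biprod.inr_snd,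
          Category.comp_id]⟩⟩
    inflation_comp := by
      rintro X Y W i j ⟨Z₁, p, hp, hp₁, hp₂⟩ ⟨Z₂, q, hq, hq₁, hq₂⟩
      obtain ⟨Z₃, r, hr⟩ := E.inflation_comp i j ⟨Z₁, p, hp⟩ ⟨Z₂, q, hq⟩
      obtain ⟨u, v, huv, hrv, hc⟩ := E.noether_infl hp hq hr
      refine ⟨Z₃, r, hr, ?_, ?_⟩
      · intro N₀ hN h
        obtain ⟨g₁, hg₁⟩ := hp₁ N₀ hN h
        obtain ⟨g₂, hg₂⟩ := hq₁ N₀ hN g₁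
        exact ⟨g₂, by rw [Category.assoc, hg₂, hg₁]⟩
      · intro N₀ hN h
        obtain ⟨w, hw⟩ := hq₂ N₀ hN (h ≫ v)
        have hz : (h - w ≫ r) ≫ v = 0 := by
          rw [Preadditive.sub_comp, Category.assoc, hrv, hw, sub_self]
        obtain ⟨t, ht⟩ := E.exists_lift hc (h - w ≫ r) hz
        obtain ⟨s, hs⟩ := hp₂ N₀ hN t
        refine ⟨w + s ≫ j, ?_⟩
        rw [Preadditive.add_comp, Category.assoc, ← huv, ← Category.assoc, hs, ht]
        abel
    deflation_comp := by
      rintro X Y W p q ⟨K, k, hk, hk₁, hk₂⟩ ⟨L, l, hl, hl₁, hl₂⟩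
      obtain ⟨M, m, hm⟩ := E.deflation_comp p q ⟨K, k, hk⟩ ⟨L, l, hl⟩
      obtain ⟨u, v, hum, hvl, hc⟩ := E.noether_defl hk hl hm
      refine ⟨M, m, hm, ?_, ?_⟩
      · intro N₀ hN h
        obtain ⟨a, ha⟩ := hk₁ N₀ hN (u ≫ h)
        have hz : u ≫ (h - m ≫ a) = 0 := by
          rw [Preadditive.comp_sub, ← Category.assoc, hum, ha, sub_self]
        obtain ⟨b, hb⟩ := E.exists_desc hc (h - m ≫ a) hz
        obtain ⟨c, hcc⟩ := hl₁ N₀ hN b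
        refine ⟨a + p ≫ c, ?_⟩
        rw [Preadditive.comp_add, ← Category.assoc, ← hvl, Category.assoc, hcc, hb]
        abel
      · intro N₀ hN h
        obtain ⟨g₁, hg₁⟩ := hl₂ N₀ hN h
        obtain ⟨g₂, hg₂⟩ := hk₂ N₀ hN g₁
        exact ⟨g₂, by rw [← Category.assoc, hg₂, hg₁]⟩
    pushout := by
      rintro X Y Z X' i p ⟨h, hproj, hinj⟩ f
      obtain ⟨Y', i', g, hP, Z', p', h'⟩ := E.pushout i p h f
      obtain ⟨d, hd, hpd⟩ := E.pushout_coker h hP h'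
      refine ⟨Y', i', g, hP, Z', p', h', ?_, ?_⟩
      · intro N₀ hN h₀
        obtain ⟨a, ha⟩ := hproj N₀ hN (f ≫ h₀)
        exact ⟨hP.desc h₀ a ha.symm, hP.inl_desc _ _ _⟩
      · intro N₀ hN h₀
        obtain ⟨a, ha⟩ := hinj N₀ hN (h₀ ≫ inv d)
        refine ⟨a ≫ g, ?_⟩
        rw [Category.assoc, ← hpd, ← Category.assoc, ha, Category.assoc,
          IsIso.inv_hom_id, Category.comp_id]
    pullback := by
      rintro X Y Z Z' i p ⟨h, hproj, hinj⟩ c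
      obtain ⟨Y', p', g, hPb, X', i', h'⟩ := E.pullback i p h c
      obtain ⟨d, hd, hdi⟩ := E.pullback_ker h hPb h'
      refine ⟨Y', p', g, hPb, X', i', h', ?_, ?_⟩
      · intro N₀ hN h₀
        obtain ⟨a, ha⟩ := hproj N₀ hN (inv d ≫ h₀)
        refine ⟨g ≫ a, ?_⟩
        rw [← Category.assoc, ← hdi, Category.assoc, ha, ← Category.assoc,
          IsIso.hom_inv_id, Category.id_comp]
      · intro N₀ hN h₀
        obtain ⟨a, ha⟩ := hinj N₀ hN (h₀ ≫ c)
        exact ⟨hPb.lift a h₀ ha, hPb.lift_snd _ _ _⟩ }, fun X Y Z i p => Iff.rfl⟩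
end

section
/- Let (C, E, s) be a skeletally small extriangulated category and let (T, ε, η) and (R, γ, μ) be bivariant δ-functors on C such that T⁰ = R⁰ = Hom_C(?, -), the bimodules T^i and R^i are weakly effaceable for all i > 0, the degree-zero connecting maps are given by pushout/pullback of extensions (f ↦ f_*δ and g ↦ g^*δ), and the two connecting maps commute in the sense that η^{i-1}∘ε^{i-2} = ε^{i-1}∘η^{i-2} on T (and likewise for R). Then there is a unique isomorphism of δ-functors θ^i: R^i → T^i for all i ≥ 0 with θ⁰ the identity of Hom_C(?, -). -/
/-!
By weak effaceability every element of `R^{n+1}(Z, U)` has the form `γ_δ y` for some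
`δ ∈ E(Z, A)` and `y ∈ R^n(A, U)`, so compatibility with the contravariant connecting maps
forces `θ^{n+1}(γ_δ y) = ε_δ (θ^n y)`. This gives uniqueness, and it defines `θ^{n+1}` once the
right-hand side is seen to depend only on `γ_δ y`: two extensions `δ₁, δ₂` of `Z` are pushouts of
`(δ₁, δ₂) ∈ E(Z, A₁ ⊞ A₂)`, and for a single `δ` realized by `A → B → Z` the exact sequences
`R^n(B, -) → R^n(A, -) → R^{n+1}(Z, -)` and their `T`-analogues do the rest. The same sequences
show that `θ^{n+1}` is bijective when `θ^n` is. Compatibility with the covariant connecting maps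
`η` then propagates from degree zero, where both functors are `Hom` and `E`, through the
commutation `η ∘ ε = ε ∘ η`.
-/

open CategoryTheory CategoryTheory.Limits Opposite

universe v u

namespace Extriangulated

variable (C : Type u) [Category.{v} C] [Preadditive C]
  [HasZeroObject C] [HasBinaryBiproducts C] [Extriangulated C]

/-- A bivariant δ-functor on the extriangulated category `C`: a sequence of
`C`-`C`-bimodules with connecting morphisms in both variables, natural with respect to
morphisms of `E`-extensions, inducing long exact sequences in both variables for every
`s`-triangle. -/
structure BivDeltaFunctor where
  /-- the sequence of bimodules -/
  T : ℕ → Cᵒᵖ ⥤ C ⥤ AddCommGrpCat.{v}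
  /-- the connecting morphisms `ε^i_δ : T^i(A,-) ⟶ T^{i+1}(Z,-)` for `δ ∈ E(Z,A)` -/
  connE : ∀ (i : ℕ) {A Z : C}, Ext Z A → ((T i).obj (op A) ⟶ (T (i + 1)).obj (op Z))
  /-- the connecting morphisms `η^i_δ : T^i(?,Z) ⟶ T^{i+1}(?,A)` for `δ ∈ E(Z,A)` -/
  connH : ∀ (i : ℕ) {A Z : C}, Ext Z A → ((T i).flip.obj Z ⟶ (T (i + 1)).flip.obj A)
  connE_natural : ∀ (i : ℕ) {A Z A' Z' : C} (δ : Ext Z A) (δ' : Ext Z' A')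
    (a : A ⟶ A') (c : Z ⟶ Z'), push a δ = pull c δ' →
    ∀ (U : C) (x : ((T i).obj (op A')).obj U),
      (connE i δ).app U (((T i).map a.op).app U x)
        = ((T (i + 1)).map c.op).app U ((connE i δ').app U x)
  connH_natural : ∀ (i : ℕ) {A Z A' Z' : C} (δ : Ext Z A) (δ' : Ext Z' A')
    (a : A ⟶ A') (c : Z ⟶ Z'), push a δ = pull c δ' →
    ∀ (U : C) (x : ((T i).obj (op U)).obj Z),
      ((T (i + 1)).obj (op U)).map a ((connH i δ).app (op U) x)
        = (connH i δ').app (op U) (((T i).obj (op U)).map c x)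
  exact₁ : ∀ (i : ℕ) {A B Z : C} (δ : Ext Z A) (k : A ⟶ B) (p : B ⟶ Z), real δ k p →
    ∀ U : C, Function.Exact ⇑(((T i).map p.op).app U) ⇑(((T i).map k.op).app U)
  exact₂ : ∀ (i : ℕ) {A B Z : C} (δ : Ext Z A) (k : A ⟶ B) (p : B ⟶ Z), real δ k p →
    ∀ U : C, Function.Exact ⇑(((T i).map k.op).app U) ⇑((connE i δ).app U)
  exact₃ : ∀ (i : ℕ) {A B Z : C} (δ : Ext Z A) (k : A ⟶ B) (p : B ⟶ Z), real δ k p →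
    ∀ U : C, Function.Exact ⇑((connE i δ).app U) ⇑(((T (i + 1)).map p.op).app U)
  exact₄ : ∀ (i : ℕ) {A B Z : C} (δ : Ext Z A) (k : A ⟶ B) (p : B ⟶ Z), real δ k p →
    ∀ U : C, Function.Exact ⇑(((T i).obj (op U)).map k) ⇑(((T i).obj (op U)).map p)
  exact₅ : ∀ (i : ℕ) {A B Z : C} (δ : Ext Z A) (k : A ⟶ B) (p : B ⟶ Z), real δ k p →
    ∀ U : C, Function.Exact ⇑(((T i).obj (op U)).map p) ⇑((connH i δ).app (op U))
  exact₆ : ∀ (i : ℕ) {A B Z : C} (δ : Ext Z A) (k : A ⟶ B) (p : B ⟶ Z), real δ k p →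
    ∀ U : C, Function.Exact ⇑((connH i δ).app (op U)) ⇑(((T (i + 1)).obj (op U)).map k)

variable {C}

/-- The assumptions (2.2)–(2.4) on a bivariant δ-functor: `T⁰` is the Hom bifunctor,
`T^i` is weakly effaceable in both variables for `i > 0`, the degree-zero connecting
maps are given by pushout/pullback of extensions (under the identification `T¹ = E`),
and the two connecting maps commute. -/
structure BivDeltaFunctor.IsGood (B : BivDeltaFunctor C) : Prop where
  hT0 : B.T 0 = preadditiveCoyoneda
  hT1 : B.T 1 = Extriangulated.E (C := C)
  effaceable_contra : ∀ (i : ℕ), 0 < i → ∀ (U Z : C) (x : ((B.T i).obj (op Z)).obj U),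
    ∃ (B₀ : C) (p : B₀ ⟶ Z), IsDeflation p ∧ ((B.T i).map p.op).app U x = 0
  effaceable_cov : ∀ (i : ℕ), 0 < i → ∀ (U A : C) (x : ((B.T i).obj (op U)).obj A),
    ∃ (B₀ : C) (k : A ⟶ B₀), IsInflation k ∧ ((B.T i).obj (op U)).map k x = 0
  connE_zero : ∀ {A Z : C} (δ : Ext Z A) (U : C) (x : ((B.T 0).obj (op A)).obj U),
    ((eqToHom hT1).app (op Z)).app U ((B.connE 0 δ).app U x)
      = push ((((eqToHom hT0).app (op A)).app U x : (A ⟶ U))) δ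
  connH_zero : ∀ {A Z : C} (δ : Ext Z A) (U : C) (x : ((B.T 0).obj (op U)).obj Z),
    ((eqToHom hT1).app (op U)).app A ((B.connH 0 δ).app (op U) x)
      = pull ((((eqToHom hT0).app (op U)).app Z x : (U ⟶ Z))) δ
  square : ∀ (i : ℕ) {A Z F H : C} (δ : Ext Z A) (ψ : Ext H F)
    (x : ((B.T i).obj (op A)).obj H),
    (B.connH (i + 1) ψ).app (op Z) ((B.connE i δ).app H x)
      = (B.connE (i + 1) δ).app F ((B.connH i ψ).app (op A) x)

/-- Compatibility of a family of bimodule morphisms with both connecting morphisms,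
i.e. the condition for being a morphism of bivariant δ-functors. -/
def IsBivDeltaMorphism (R T : BivDeltaFunctor C) (θ : ∀ i, R.T i ⟶ T.T i) : Prop :=
  (∀ (i : ℕ) {A Z : C} (δ : Ext Z A) (U : C) (x : ((R.T i).obj (op A)).obj U),
    ((θ (i + 1)).app (op Z)).app U ((R.connE i δ).app U x)
      = (T.connE i δ).app U (((θ i).app (op A)).app U x)) ∧
  (∀ (i : ℕ) {A Z : C} (δ : Ext Z A) (U : C) (x : ((R.T i).obj (op U)).obj Z),
    ((θ (i + 1)).app (op U)).app A ((R.connH i δ).app (op U) x)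
      = (T.connH i δ).app (op U) (((θ i).app (op U)).app Z x))

end Extriangulated

namespace CategoryTheory

variable {C : Type u} [Category.{v} C] {F G H : Cᵒᵖ ⥤ C ⥤ AddCommGrpCat.{v}}

lemma eqToHom_app_app_eqToHom_app_app (h : F = G) (h' : G = H) (Z : Cᵒᵖ) (U : C)
    (x : (F.obj Z).obj U) :
    ((eqToHom h').app Z).app U (((eqToHom h).app Z).app U x)
      = ((eqToHom (h.trans h')).app Z).app U x := by
  subst h h'; rfl

lemma eqToHom_app_app_injective (h : F = G) (Z : Cᵒᵖ) (U : C) :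
    Function.Injective (((eqToHom h).app Z).app U) := by
  subst h; exact Function.injective_id

lemma NatTrans.naturality_app_apply (θ : F ⟶ G) {Z Z' : Cᵒᵖ} (c : Z ⟶ Z') (U : C)
    (x : (F.obj Z).obj U) :
    (θ.app Z').app U ((F.map c).app U x) = (G.map c).app U ((θ.app Z).app U x) :=
  ConcreteCategory.congr_hom (NatTrans.naturality_app θ U c) x

lemma isIso_iff_bijective_app_app (θ : F ⟶ G) :
    IsIso θ ↔ ∀ Z U, Function.Bijective ((θ.app Z).app U) := by
  simp only [NatTrans.isIso_iff_isIso_app, ConcreteCategory.isIso_iff_bijective]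

end CategoryTheory

namespace Extriangulated

variable {C : Type u} [Category.{v} C] [Preadditive C]
  [HasZeroObject C] [HasBinaryBiproducts C] [Extriangulated C]

lemma push_id {Z A : C} (δ : Ext Z A) : push (𝟙 A) δ = δ := by
  simp [push]

lemma pull_id {Z A : C} (δ : Ext Z A) : pull (𝟙 Z) δ = δ := by
  simp [pull]

lemma push_comp {Z A A' A'' : C} (f : A ⟶ A') (g : A' ⟶ A'') (δ : Ext Z A) :
    push (f ≫ g) δ = push g (push f δ) := by
  simp [push]

lemma push_zero {Z A A' : C} (δ : Ext Z A) : push (0 : A ⟶ A') δ = 0 := by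
  have := additive_obj (C := C) (op Z)
  simp [push]

lemma exists_push_eq_and_push_eq {Z A₁ A₂ : C} (δ₁ : Ext Z A₁) (δ₂ : Ext Z A₂) :
    ∃ (A : C) (δ : Ext Z A) (f₁ : A ⟶ A₁) (f₂ : A ⟶ A₂),
      push f₁ δ = δ₁ ∧ push f₂ δ = δ₂ := by
  refine ⟨A₁ ⊞ A₂, push biprod.inl δ₁ + push biprod.inr δ₂, biprod.fst, biprod.snd, ?_, ?_⟩
  all_goals
    simp only [map_add, ← push_comp, biprod.inl_fst, biprod.inr_fst, biprod.inl_snd,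
      biprod.inr_snd, push_id, push_zero, add_zero, zero_add]

namespace BivDeltaFunctor

variable (B : BivDeltaFunctor C) (n : ℕ)

lemma connE_map_of_push_eq {Z A A' : C} (f : A ⟶ A') (δ : Ext Z A) (U : C)
    (y : ((B.T n).obj (op A')).obj U) :
    (B.connE n δ).app U (((B.T n).map f.op).app U y) = (B.connE n (push f δ)).app U y := by
  simpa using B.connE_natural n δ (push f δ) f (𝟙 Z) (pull_id _).symm U y

lemma connE_pull {Z Z' A : C} (c : Z' ⟶ Z) (δ : Ext Z A) (U : C)
    (y : ((B.T n).obj (op A)).obj U) :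
    (B.connE n (pull c δ)).app U y = ((B.T (n + 1)).map c.op).app U ((B.connE n δ).app U y) := by
  simpa using B.connE_natural n (pull c δ) δ (𝟙 A) c (push_id _) U y

structure ConnEPreimage (Z U : C) (x : ((B.T (n + 1)).obj (op Z)).obj U) where
  A : C
  δ : Ext Z A
  y : ((B.T n).obj (op A)).obj U
  connE_app : (B.connE n δ).app U y = x

variable {B}

lemma IsGood.nonempty_connEPreimage (hB : B.IsGood) (Z U : C)
    (x : ((B.T (n + 1)).obj (op Z)).obj U) : Nonempty (B.ConnEPreimage n Z U x) := by
  obtain ⟨_, p, ⟨A, k, δ, hδ⟩, hx⟩ := hB.effaceable_contra (n + 1) n.succ_pos U Z x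
  obtain ⟨y, hy⟩ := (B.exact₃ n δ k p hδ U x).mp hx
  exact ⟨⟨A, δ, y, hy⟩⟩

end BivDeltaFunctor

section ConnELift

variable {T R : BivDeltaFunctor C} {n : ℕ}

def ConnECompatible (θ : R.T n ⟶ T.T n) (θ' : R.T (n + 1) ⟶ T.T (n + 1)) : Prop :=
  ∀ {A Z : C} (δ : Ext Z A) (U : C) (x : ((R.T n).obj (op A)).obj U),
    (θ'.app (op Z)).app U ((R.connE n δ).app U x) = (T.connE n δ).app U ((θ.app (op A)).app U x)

def ConnHCompatible (θ : R.T n ⟶ T.T n) (θ' : R.T (n + 1) ⟶ T.T (n + 1)) : Prop :=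
  ∀ {A Z : C} (δ : Ext Z A) (U : C) (x : ((R.T n).obj (op U)).obj Z),
    (θ'.app (op U)).app A ((R.connH n δ).app (op U) x)
      = (T.connH n δ).app (op U) ((θ.app (op U)).app Z x)

variable (θ : R.T n ⟶ T.T n)

lemma connE_app_app_eq_zero_of_connE_app_eq_zero {Z A U : C} (δ : Ext Z A)
    {y : ((R.T n).obj (op A)).obj U} (hy : (R.connE n δ).app U y = 0) :
    (T.connE n δ).app U ((θ.app (op A)).app U y) = 0 := by
  obtain ⟨_, k, p, hδ⟩ := real_exists δ
  obtain ⟨w, rfl⟩ := (R.exact₂ n δ k p hδ U y).mp hy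
  rw [NatTrans.naturality_app_apply]
  exact (T.exact₂ n δ k p hδ U).apply_apply_eq_zero _

lemma connE_app_app_eq_of_connE_app_eq {Z A₁ A₂ U : C} (δ₁ : Ext Z A₁) (δ₂ : Ext Z A₂)
    {y₁ : ((R.T n).obj (op A₁)).obj U} {y₂ : ((R.T n).obj (op A₂)).obj U}
    (hy : (R.connE n δ₁).app U y₁ = (R.connE n δ₂).app U y₂) :
    (T.connE n δ₁).app U ((θ.app (op A₁)).app U y₁)
      = (T.connE n δ₂).app U ((θ.app (op A₂)).app U y₂) := by
  obtain ⟨A, δ, f₁, f₂, rfl, rfl⟩ := exists_push_eq_and_push_eq δ₁ δ₂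
  simp only [← BivDeltaFunctor.connE_map_of_push_eq, ← NatTrans.naturality_app_apply] at hy ⊢
  rw [← sub_eq_zero, ← map_sub] at hy
  rw [← sub_eq_zero, ← map_sub, ← map_sub]
  exact connE_app_app_eq_zero_of_connE_app_eq_zero θ δ hy

variable (hR : R.IsGood)

noncomputable def connELiftApp (Z U : C) (x : ((R.T (n + 1)).obj (op Z)).obj U) :
    ((T.T (n + 1)).obj (op Z)).obj U :=
  let P := (hR.nonempty_connEPreimage n Z U x).some
  (T.connE n P.δ).app U ((θ.app (op P.A)).app U P.y)

lemma connELiftApp_connE_app {Z A U : C} (δ : Ext Z A) (y : ((R.T n).obj (op A)).obj U) :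
    connELiftApp θ hR Z U ((R.connE n δ).app U y)
      = (T.connE n δ).app U ((θ.app (op A)).app U y) :=
  connE_app_app_eq_of_connE_app_eq θ _ _ (hR.nonempty_connEPreimage n Z U _).some.connE_app

lemma connELiftApp_add (Z U : C) (x x' : ((R.T (n + 1)).obj (op Z)).obj U) :
    connELiftApp θ hR Z U (x + x') = connELiftApp θ hR Z U x + connELiftApp θ hR Z U x' := by
  obtain ⟨⟨A₁, δ₁, y₁, rfl⟩⟩ := hR.nonempty_connEPreimage n Z U x
  obtain ⟨⟨A₂, δ₂, y₂, rfl⟩⟩ := hR.nonempty_connEPreimage n Z U x'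
  obtain ⟨A, δ, f₁, f₂, rfl, rfl⟩ := exists_push_eq_and_push_eq δ₁ δ₂
  simp only [← BivDeltaFunctor.connE_map_of_push_eq]
  rw [← map_add, connELiftApp_connE_app, connELiftApp_connE_app, connELiftApp_connE_app,
    map_add, map_add]

lemma connELiftApp_map {Z U U' : C} (u : U ⟶ U') (x : ((R.T (n + 1)).obj (op Z)).obj U) :
    connELiftApp θ hR Z U' (((R.T (n + 1)).obj (op Z)).map u x)
      = ((T.T (n + 1)).obj (op Z)).map u (connELiftApp θ hR Z U x) := by
  obtain ⟨⟨A, δ, y, rfl⟩⟩ := hR.nonempty_connEPreimage n Z U x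
  rw [← NatTrans.naturality_apply, connELiftApp_connE_app, connELiftApp_connE_app,
    NatTrans.naturality_apply, NatTrans.naturality_apply]

lemma connELiftApp_map_app {Z Z' : C} (c : Z' ⟶ Z) (U : C)
    (x : ((R.T (n + 1)).obj (op Z)).obj U) :
    connELiftApp θ hR Z' U (((R.T (n + 1)).map c.op).app U x)
      = ((T.T (n + 1)).map c.op).app U (connELiftApp θ hR Z U x) := by
  obtain ⟨⟨A, δ, y, rfl⟩⟩ := hR.nonempty_connEPreimage n Z U x
  rw [← BivDeltaFunctor.connE_pull, connELiftApp_connE_app, connELiftApp_connE_app,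
    BivDeltaFunctor.connE_pull]

noncomputable def connELift : R.T (n + 1) ⟶ T.T (n + 1) where
  app Z :=
    { app U := AddCommGrpCat.ofHom (AddMonoidHom.mk' _ (connELiftApp_add θ hR Z.unop U))
      naturality _ _ u := by ext x; exact connELiftApp_map θ hR u x }
  naturality _ _ c := by ext U x; exact connELiftApp_map_app θ hR c.unop U x

lemma connECompatible_connELift : ConnECompatible θ (connELift θ hR) :=
  fun δ _ y => connELiftApp_connE_app θ hR δ y

lemma eq_connELift_of_connECompatible {θ' : R.T (n + 1) ⟶ T.T (n + 1)}
    (hθ' : ConnECompatible θ θ') : θ' = connELift θ hR := by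
  ext Z U x
  obtain ⟨⟨A, δ, y, rfl⟩⟩ := hR.nonempty_connEPreimage n Z.unop U x
  rw [hθ', connECompatible_connELift]

section IsIso

variable [IsIso θ]

lemma injective_connELift_app_app (Z U : C) :
    Function.Injective (((connELift θ hR).app (op Z)).app U) := by
  refine (injective_iff_map_eq_zero
    (ConcreteCategory.hom (((connELift θ hR).app (op Z)).app U))).mpr fun x hx => ?_
  obtain ⟨⟨A, δ, y, rfl⟩⟩ := hR.nonempty_connEPreimage n Z U x
  rw [connECompatible_connELift] at hx
  obtain ⟨B, k, p, hδ⟩ := real_exists δ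
  obtain ⟨v, hv⟩ := (T.exact₂ n δ k p hδ U _).mp hx
  obtain ⟨u, rfl⟩ := (ConcreteCategory.bijective_of_isIso ((θ.app (op B)).app U)).2 v
  have hy : y = ((R.T n).map k.op).app U u :=
    (ConcreteCategory.bijective_of_isIso ((θ.app (op A)).app U)).1
      (by rw [NatTrans.naturality_app_apply, hv])
  rw [hy]
  exact (R.exact₂ n δ k p hδ U).apply_apply_eq_zero u

lemma surjective_connELift_app_app (hT : T.IsGood) (Z U : C) :
    Function.Surjective (((connELift θ hR).app (op Z)).app U) := by
  intro t
  obtain ⟨⟨A, δ, s, rfl⟩⟩ := hT.nonempty_connEPreimage n Z U t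
  obtain ⟨y, rfl⟩ := (ConcreteCategory.bijective_of_isIso ((θ.app (op A)).app U)).2 s
  exact ⟨(R.connE n δ).app U y, connECompatible_connELift θ hR δ U y⟩

lemma isIso_connELift (hT : T.IsGood) : IsIso (connELift θ hR) :=
  (isIso_iff_bijective_app_app _).mpr fun Z U =>
    ⟨injective_connELift_app_app θ hR Z.unop U, surjective_connELift_app_app θ hR hT Z.unop U⟩

end IsIso

end ConnELift

lemma connHCompatible_connELift {T R : BivDeltaFunctor C} (hT : T.IsGood) (hR : R.IsGood)
    {m : ℕ} {θ₀ : R.T m ⟶ T.T m} {θ : R.T (m + 1) ⟶ T.T (m + 1)}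
    (hE : ConnECompatible θ₀ θ) (hH : ConnHCompatible θ₀ θ) :
    ConnHCompatible θ (connELift θ hR) := by
  intro A Z δ U x
  obtain ⟨⟨A₀, δ₀, w, rfl⟩⟩ := hR.nonempty_connEPreimage m U Z x
  rw [hR.square, connECompatible_connELift, hH, ← hT.square, ← hE]

section Comparison

variable {T R : BivDeltaFunctor C} (hT : T.IsGood) (hR : R.IsGood)

lemma connECompatible_eqToHom :
    ConnECompatible (eqToHom (hR.hT0.trans hT.hT0.symm)) (eqToHom (hR.hT1.trans hT.hT1.symm)) := by
  intro A Z δ U x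
  apply eqToHom_app_app_injective hT.hT1
  rw [eqToHom_app_app_eqToHom_app_app, hT.connE_zero, eqToHom_app_app_eqToHom_app_app]
  exact hR.connE_zero δ U x

lemma connHCompatible_eqToHom :
    ConnHCompatible (eqToHom (hR.hT0.trans hT.hT0.symm)) (eqToHom (hR.hT1.trans hT.hT1.symm)) := by
  intro A Z δ U x
  apply eqToHom_app_app_injective hT.hT1
  rw [eqToHom_app_app_eqToHom_app_app, hT.connH_zero, eqToHom_app_app_eqToHom_app_app]
  exact hR.connH_zero δ U x

noncomputable def comparison : ∀ i, R.T i ⟶ T.T i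
  | 0 => eqToHom (hR.hT0.trans hT.hT0.symm)
  | i + 1 => connELift (comparison i) hR

lemma comparison_one : comparison hT hR 1 = eqToHom (hR.hT1.trans hT.hT1.symm) :=
  (eq_connELift_of_connECompatible _ hR (connECompatible_eqToHom hT hR)).symm

lemma isIso_comparison (i : ℕ) : IsIso (comparison hT hR i) := by
  induction i with
  | zero => exact inferInstanceAs (IsIso (eqToHom _))
  | succ i ih => exact isIso_connELift _ hR hT

lemma connECompatible_comparison (i : ℕ) :
    ConnECompatible (comparison hT hR i) (comparison hT hR (i + 1)) :=
  connECompatible_connELift _ hR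

lemma connHCompatible_comparison (i : ℕ) :
    ConnHCompatible (comparison hT hR i) (comparison hT hR (i + 1)) := by
  induction i with
  | zero => rw [comparison_one]; exact connHCompatible_eqToHom hT hR
  | succ i ih => exact connHCompatible_connELift hT hR (connECompatible_comparison hT hR i) ih

lemma eq_comparison {θ : ∀ i, R.T i ⟶ T.T i} (h₀ : θ 0 = eqToHom (hR.hT0.trans hT.hT0.symm))
    (hE : ∀ i, ConnECompatible (θ i) (θ (i + 1))) : θ = comparison hT hR := by
  funext i
  induction i with
  | zero => exact h₀
  | succ i ih => exact eq_connELift_of_connECompatible _ hR (ih ▸ hE i)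

end Comparison

end Extriangulated

open Extriangulated in
/-- If `(T, ε, η)` and `(R, γ, μ)` are bivariant δ-functors on a (skeletally small)
extriangulated category satisfying the assumptions (2.2)–(2.4) — `T⁰ = R⁰ = Hom`,
weak effaceability in positive degrees, degree-zero connecting maps given by
pushout/pullback of extensions, and commutation of the two connecting maps — then
there is a unique isomorphism of δ-functors `θ : R → T` with `θ⁰` the identity of
`Hom_C(?, -)`. -/
theorem statement14 {C : Type u} [Category.{v} C] [Preadditive C]
    [HasZeroObject C] [HasBinaryBiproducts C] [Extriangulated C]
    (T R : BivDeltaFunctor C) (hT : T.IsGood) (hR : R.IsGood) :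
    ∃! θ : ∀ i, R.T i ⟶ T.T i,
      (∀ i, IsIso (θ i)) ∧
      θ 0 = eqToHom (hR.hT0.trans hT.hT0.symm) ∧
      IsBivDeltaMorphism R T θ := by
  refine ⟨comparison hT hR, ⟨isIso_comparison hT hR, rfl, connECompatible_comparison hT hR,
    connHCompatible_comparison hT hR⟩, ?_⟩
  rintro θ ⟨-, h₀, hE, -⟩
  exact eq_comparison hT hR h₀ hE
end
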